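/- arXiv:1407.1384 — 2 statements merged into one kernel-verified Lean document; each statement's English description precedes it below -/
import Mathlib

section
/- For any nonnegative parameters κ₁, κ₂, the endpoints u^± = 1/2 + (κ₁² − κ₂² ± 4√((1+κ₁)(1+κ₂)(1+κ₁+κ₂))) / (2(2+κ₁+κ₂)²) satisfy 0 ≤ u⁻ < u⁺ ≤ 1, with u⁻ = 0 if and only if κ₁ = 0 and u⁺ = 1 if and only if κ₂ = 0. -/
/-!
With `X = (1 + κ₁)(1 + κ₁ + κ₂)` and `Y = 1 + κ₂`, the radicand is `XY` and
`((2 + κ₁ + κ₂)² + κ₁² - κ₂²) / 2 = X + Y`, so `u⁻ = ((√X - √Y) / (2 + κ₁ + κ₂))²`.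
Hence `u⁻ ≥ 0`, with equality iff `X = Y`, i.e. `κ₁ (2 + κ₁ + κ₂) = 0`.
The upper endpoint reduces to the lower one through `1 - u⁺(κ₁, κ₂) = u⁻(κ₂, κ₁)`.
-/

open Real

lemma add_sub_two_mul_sqrt_mul {x y : ℝ} (hx : 0 ≤ x) (hy : 0 ≤ y) :
    x + y - 2 * √(x * y) = (√x - √y) ^ 2 := by
  rw [sqrt_mul hx, sub_sq, sq_sqrt hx, sq_sqrt hy]
  ring

noncomputable def kestenMcKayLower (κ₁ κ₂ : ℝ) : ℝ :=
  1/2 + (κ₁ ^ 2 - κ₂ ^ 2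
    - 4 * Real.sqrt ((1 + κ₁) * (1 + κ₂) * (1 + κ₁ + κ₂))) / (2 * (2 + κ₁ + κ₂) ^ 2)

noncomputable def kestenMcKayUpper (κ₁ κ₂ : ℝ) : ℝ :=
  1/2 + (κ₁ ^ 2 - κ₂ ^ 2
    + 4 * Real.sqrt ((1 + κ₁) * (1 + κ₂) * (1 + κ₁ + κ₂))) / (2 * (2 + κ₁ + κ₂) ^ 2)

section

variable {κ₁ κ₂ : ℝ}

lemma kestenMcKayLower_eq_sq (h₁ : 0 ≤ κ₁) (h₂ : 0 ≤ κ₂) :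
    kestenMcKayLower κ₁ κ₂
      = ((√((1 + κ₁) * (1 + κ₁ + κ₂)) - √(1 + κ₂)) / (2 + κ₁ + κ₂)) ^ 2 := by
  have hD : 2 + κ₁ + κ₂ ≠ 0 := by positivity
  rw [div_pow, ← add_sub_two_mul_sqrt_mul (by positivity) (by positivity), kestenMcKayLower,
    show (1 + κ₁) * (1 + κ₂) * (1 + κ₁ + κ₂) = (1 + κ₁) * (1 + κ₁ + κ₂) * (1 + κ₂) by ring]
  field_simp
  ring

lemma kestenMcKayLower_nonneg (h₁ : 0 ≤ κ₁) (h₂ : 0 ≤ κ₂) : 0 ≤ kestenMcKayLower κ₁ κ₂ := by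
  rw [kestenMcKayLower_eq_sq h₁ h₂]
  positivity

lemma kestenMcKayLower_eq_zero_iff (h₁ : 0 ≤ κ₁) (h₂ : 0 ≤ κ₂) :
    kestenMcKayLower κ₁ κ₂ = 0 ↔ κ₁ = 0 := by
  have hD : 0 < 2 + κ₁ + κ₂ := by positivity
  rw [kestenMcKayLower_eq_sq h₁ h₂, sq_eq_zero_iff, div_eq_zero_iff, or_iff_left hD.ne',
    sub_eq_zero, sqrt_inj (by positivity) (by positivity)]
  constructor
  · intro h
    have hprod : κ₁ * (2 + κ₁ + κ₂) = 0 := by linear_combination h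
    exact (mul_eq_zero.mp hprod).resolve_right hD.ne'
  · rintro rfl
    ring

lemma kestenMcKayLower_lt_upper (h₁ : 0 ≤ κ₁) (h₂ : 0 ≤ κ₂) :
    kestenMcKayLower κ₁ κ₂ < kestenMcKayUpper κ₁ κ₂ := by
  have hs : 0 < √((1 + κ₁) * (1 + κ₂) * (1 + κ₁ + κ₂)) := by positivity
  unfold kestenMcKayLower kestenMcKayUpper
  gcongr
  linarith

lemma one_sub_kestenMcKayUpper (κ₁ κ₂ : ℝ) :
    1 - kestenMcKayUpper κ₁ κ₂ = kestenMcKayLower κ₂ κ₁ := by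
  rw [kestenMcKayUpper, kestenMcKayLower, add_right_comm 2 κ₂ κ₁, add_right_comm 1 κ₂ κ₁,
    mul_comm (1 + κ₂) (1 + κ₁)]
  ring

lemma kestenMcKayUpper_le_one (h₁ : 0 ≤ κ₁) (h₂ : 0 ≤ κ₂) : kestenMcKayUpper κ₁ κ₂ ≤ 1 := by
  have := one_sub_kestenMcKayUpper κ₁ κ₂ ▸ kestenMcKayLower_nonneg h₂ h₁
  linarith

lemma kestenMcKayUpper_eq_one_iff (h₁ : 0 ≤ κ₁) (h₂ : 0 ≤ κ₂) :
    kestenMcKayUpper κ₁ κ₂ = 1 ↔ κ₂ = 0 := by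
  rw [← kestenMcKayLower_eq_zero_iff h₂ h₁, ← one_sub_kestenMcKayUpper, sub_eq_zero, eq_comm]

end

/-- Properties of the support endpoints `u^±` of the Kesten–McKay distribution:
`0 ≤ u⁻ < u⁺ ≤ 1`, with `u⁻ = 0 ↔ κ₁ = 0` and `u⁺ = 1 ↔ κ₂ = 0`. -/
theorem kestenMcKay_endpoints (κ₁ κ₂ : ℝ) (h1 : 0 ≤ κ₁) (h2 : 0 ≤ κ₂) :
    (0 ≤ 1/2 + (κ₁ ^ 2 - κ₂ ^ 2
        - 4 * Real.sqrt ((1 + κ₁) * (1 + κ₂) * (1 + κ₁ + κ₂))) / (2 * (2 + κ₁ + κ₂) ^ 2)) ∧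
    (1/2 + (κ₁ ^ 2 - κ₂ ^ 2
        - 4 * Real.sqrt ((1 + κ₁) * (1 + κ₂) * (1 + κ₁ + κ₂))) / (2 * (2 + κ₁ + κ₂) ^ 2)
      < 1/2 + (κ₁ ^ 2 - κ₂ ^ 2
        + 4 * Real.sqrt ((1 + κ₁) * (1 + κ₂) * (1 + κ₁ + κ₂))) / (2 * (2 + κ₁ + κ₂) ^ 2)) ∧
    (1/2 + (κ₁ ^ 2 - κ₂ ^ 2
        + 4 * Real.sqrt ((1 + κ₁) * (1 + κ₂) * (1 + κ₁ + κ₂))) / (2 * (2 + κ₁ + κ₂) ^ 2) ≤ 1) ∧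
    ((1/2 + (κ₁ ^ 2 - κ₂ ^ 2
        - 4 * Real.sqrt ((1 + κ₁) * (1 + κ₂) * (1 + κ₁ + κ₂))) / (2 * (2 + κ₁ + κ₂) ^ 2) = 0)
      ↔ κ₁ = 0) ∧
    ((1/2 + (κ₁ ^ 2 - κ₂ ^ 2
        + 4 * Real.sqrt ((1 + κ₁) * (1 + κ₂) * (1 + κ₁ + κ₂))) / (2 * (2 + κ₁ + κ₂) ^ 2) = 1)
      ↔ κ₂ = 0) :=
  ⟨kestenMcKayLower_nonneg h1 h2, kestenMcKayLower_lt_upper h1 h2,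
    kestenMcKayUpper_le_one h1 h2, kestenMcKayLower_eq_zero_iff h1 h2,
    kestenMcKayUpper_eq_one_iff h1 h2⟩
end

section
/- Let μ_V be a probability measure and μ a positive finite measure with Lebesgue decomposition dμ = h dμ_V + dμ_s (h ≥ 0 measurable, μ_s ⊥ μ_V). Suppose h > 0 μ_V-a.e. and μ_s = 0 defines the reference point; then for the functional Λ*(ν) = −∫ log h_ν dμ_V − 1 + ν(ℝ) (with dν = h_ν dμ_V + dν_s), and f = 1 − h⁻¹ (assumed bounded), one has Λ*(μ) − ∫ f dμ < Λ*(ν) − ∫ f dν for every finite measure ν ≠ μ with Λ*(ν) < ∞. Equivalently: ∫ log(h/h_ν) dμ_V ≥ ∫ dμ_V − ∫ h⁻¹ dν, with equality only if h_ν = h μ_V-a.e. and ν_s = 0. -/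
/-! Put `g = h⁻¹ hν`, so that `log (h / hν) = -log g`. Integrating `log g ≤ g - 1` against the
probability measure `μV` gives `∫ log (h / hν) dμV ≥ 1 - ∫ g dμV`, and `∫ h⁻¹ dνs ≥ 0` does the
rest. In the equality case both estimates are tight: `log g = g - 1` a.e. forces `g = 1`, and a
strictly positive function has zero integral only against the zero measure. -/

open MeasureTheory

section LogInequality

variable {α : Type*} [MeasurableSpace α] {μ : Measure α} {g : α → ℝ}

lemma integral_log_le_integral_sub_one [IsProbabilityMeasure μ] (hg : ∀ᵐ x ∂μ, 0 < g x)
    (hlog : Integrable (fun x => Real.log (g x)) μ) (hint : Integrable g μ) :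
    ∫ x, Real.log (g x) ∂μ ≤ ∫ x, g x ∂μ - 1 := by
  calc ∫ x, Real.log (g x) ∂μ ≤ ∫ x, (g x - 1) ∂μ :=
        integral_mono_ae hlog (hint.sub (integrable_const 1)) <| by
          filter_upwards [hg] with x hx using Real.log_le_sub_one_of_pos hx
    _ = ∫ x, g x ∂μ - 1 := by simp [integral_sub hint (integrable_const 1)]

lemma ae_eq_one_of_integral_log_eq_integral_sub_one [IsProbabilityMeasure μ]
    (hg : ∀ᵐ x ∂μ, 0 < g x) (hlog : Integrable (fun x => Real.log (g x)) μ)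
    (hint : Integrable g μ) (heq : ∫ x, Real.log (g x) ∂μ = ∫ x, g x ∂μ - 1) :
    g =ᵐ[μ] 1 := by
  have hsub : Integrable (fun x => g x - 1) μ := hint.sub (integrable_const 1)
  have hle : (fun x => Real.log (g x)) ≤ᵐ[μ] fun x => g x - 1 := by
    filter_upwards [hg] with x hx using Real.log_le_sub_one_of_pos hx
  have hlog_eq : (fun x => Real.log (g x)) =ᵐ[μ] fun x => g x - 1 := by
    refine (integral_eq_iff_of_ae_le hlog hsub hle).mp ?_
    simpa [integral_sub hint (integrable_const 1)] using heq
  filter_upwards [hg, hlog_eq] with x hx hx_eq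
  by_contra hne
  exact (Real.log_lt_sub_one_of_pos hx hne).ne hx_eq

end LogInequality

lemma Measure.eq_zero_of_integral_eq_zero_of_pos {α : Type*} [MeasurableSpace α]
    {ν : Measure α} {f : α → ℝ} (hpos : ∀ x, 0 < f x) (hint : Integrable f ν)
    (hzero : ∫ x, f x ∂ν = 0) : ν = 0 := by
  have hsupp : Function.support f = Set.univ :=
    Set.eq_univ_of_forall fun x => (hpos x).ne'
  have := (integral_pos_iff_support_of_nonneg (fun x => (hpos x).le) hint).not
  rw [hzero, hsupp] at this
  simpa using this

theorem exposed_point_inequality_general (μV : Measure ℝ) [IsProbabilityMeasure μV]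
    (h hν : ℝ → ℝ) (νs : Measure ℝ)
    (hpos : ∀ x, 0 < h x) (hνpos : ∀ᵐ x ∂μV, 0 < hν x)
    (hint : Integrable (fun x => Real.log (h x / hν x)) μV)
    (hint2 : Integrable (fun x => (h x)⁻¹ * hν x) μV)
    (hint3 : Integrable (fun x => (h x)⁻¹) νs) :
    (∫ x, Real.log (h x / hν x) ∂μV
        ≥ 1 - ((∫ x, (h x)⁻¹ * hν x ∂μV) + ∫ x, (h x)⁻¹ ∂νs)) ∧
    ((∫ x, Real.log (h x / hν x) ∂μV
        = 1 - ((∫ x, (h x)⁻¹ * hν x ∂μV) + ∫ x, (h x)⁻¹ ∂νs))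
      → (h =ᵐ[μV] hν ∧ νs = 0)) := by
  have hlog_eq (x : ℝ) : Real.log ((h x)⁻¹ * hν x) = -Real.log (h x / hν x) := by
    rw [← Real.log_inv, inv_div, div_eq_inv_mul]
  have hg_pos : ∀ᵐ x ∂μV, 0 < (h x)⁻¹ * hν x := by
    filter_upwards [hνpos] with x hx using mul_pos (inv_pos.mpr (hpos x)) hx
  have hlog : Integrable (fun x => Real.log ((h x)⁻¹ * hν x)) μV := by
    simp only [hlog_eq]
    exact hint.neg
  have hlog_integral : ∫ x, Real.log ((h x)⁻¹ * hν x) ∂μV = -∫ x, Real.log (h x / hν x) ∂μV := by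
    simp only [hlog_eq, integral_neg]
  have hμV := integral_log_le_integral_sub_one hg_pos hlog hint2
  have hνs : 0 ≤ ∫ x, (h x)⁻¹ ∂νs := integral_nonneg fun x => (inv_pos.mpr (hpos x)).le
  refine ⟨by linarith, fun heq => ⟨?_, ?_⟩⟩
  · have hg_one := ae_eq_one_of_integral_log_eq_integral_sub_one hg_pos hlog hint2 (by linarith)
    filter_upwards [hg_one] with x hx
    exact (inv_mul_eq_one₀ (hpos x).ne').mp hx
  · exact Measure.eq_zero_of_integral_eq_zero_of_pos (fun x => inv_pos.mpr (hpos x)) hint3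
      (by linarith)

/-- Strict convexity (exposed point) of the rate functional: with `dμ = h dμ_V`,
`dν = h_ν dμ_V + dν_s` (`ν_s ⊥ μ_V`), `h > 0`,
`∫ log(h/h_ν) dμ_V ≥ 1 - (∫ h⁻¹ h_ν dμ_V + ∫ h⁻¹ dν_s)`, with equality only if
`h_ν = h` μ_V-a.e. and `ν_s = 0`. -/
theorem exposed_point_inequality (μV : Measure ℝ) [IsProbabilityMeasure μV]
    (h hν : ℝ → ℝ) (νs : Measure ℝ) [IsFiniteMeasure νs]
    (hmeas : Measurable h) (hνmeas : Measurable hν)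
    (hpos : ∀ x, 0 < h x) (hνpos : ∀ᵐ x ∂μV, 0 < hν x)
    (hsing : MeasureTheory.Measure.MutuallySingular νs μV)
    (hint : Integrable (fun x => Real.log (h x / hν x)) μV)
    (hint2 : Integrable (fun x => (h x)⁻¹ * hν x) μV)
    (hint3 : Integrable (fun x => (h x)⁻¹) νs) :
    (∫ x, Real.log (h x / hν x) ∂μV
        ≥ 1 - ((∫ x, (h x)⁻¹ * hν x ∂μV) + ∫ x, (h x)⁻¹ ∂νs)) ∧
    ((∫ x, Real.log (h x / hν x) ∂μV
        = 1 - ((∫ x, (h x)⁻¹ * hν x ∂μV) + ∫ x, (h x)⁻¹ ∂νs))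
      → (h =ᵐ[μV] hν ∧ νs = 0)) :=
  exposed_point_inequality_general μV h hν νs hpos hνpos hint hint2 hint3
end
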